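/- Let q be a complex number with |q| = 1 and let (V₁,V₂) be a q-commutative pair of isometries on a complex Hilbert space such that at least one of V₁, V₂ is a shift. Then the product V = V₁V₂ is a shift, i.e., V^{*n} → 0 in the strong operator topology. -/

import Mathlib

/-!
If `V₁ V₂ = q V₂ V₁`, moving factors past each other gives
`V₁ⁿ V₂ⁿ = q^(n choose 2) (V₁ V₂)ⁿ`, so `‖(V₁ V₂)^{*n} h‖ = ‖V₂^{*n} V₁^{*n} h‖ ≤ ‖V₁^{*n} h‖`,
the adjoint of an isometry being a contraction. When `V₂` is the shift, apply this to
`V₂ V₁ = q̄ V₁ V₂`: unimodular scalars do not change these norms.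
-/

open ContinuousLinearMap Filter

section QCommuting

variable {R A : Type*} [CommSemiring R] [Semiring A] [Algebra R A] {p q : R} {a b : A}

theorem mul_eq_smul_mul_of_mul_eq_smul (hpq : p * q = 1) (hab : a * b = q • (b * a)) :
    b * a = p • (a * b) := by
  rw [hab, smul_smul, hpq, one_smul]

theorem pow_mul_eq_smul_mul_pow_of_mul_eq_smul (hab : a * b = q • (b * a)) (n : ℕ) :
    a ^ n * b = q ^ n • (b * a ^ n) := by
  induction n with
  | zero => simp
  | succ n ih =>
    rw [pow_succ', mul_assoc, ih, mul_smul_comm, ← mul_assoc, hab, smul_mul_assoc, smul_smul,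
      mul_assoc, pow_succ]

theorem pow_mul_pow_eq_smul_mul_pow_of_mul_eq_smul (hab : a * b = q • (b * a)) (n : ℕ) :
    a ^ n * b ^ n = q ^ n.choose 2 • (a * b) ^ n := by
  induction n with
  | zero => simp
  | succ n ih =>
    calc a ^ (n + 1) * b ^ (n + 1) = a * (a ^ n * b) * b ^ n := by
          rw [pow_succ', pow_succ']; simp only [mul_assoc]
      _ = q ^ n • (a * b * (a ^ n * b ^ n)) := by
          rw [pow_mul_eq_smul_mul_pow_of_mul_eq_smul hab, mul_smul_comm, smul_mul_assoc]
          simp only [mul_assoc]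
      _ = q ^ (n + 1).choose 2 • (a * b) ^ (n + 1) := by
          rw [ih, mul_smul_comm, smul_smul, ← pow_succ', ← pow_add, Nat.choose_succ_succ,
            Nat.choose_one_right]

end QCommuting

theorem norm_pow_apply_le_of_norm_le_one {𝕜 E : Type*} [NontriviallyNormedField 𝕜]
    [SeminormedAddCommGroup E] [NormedSpace 𝕜 E] {T : E →L[𝕜] E} (hT : ‖T‖ ≤ 1) (n : ℕ)
    (x : E) : ‖(T ^ n) x‖ ≤ ‖x‖ := by
  induction n generalizing x with
  | zero => simp
  | succ n ih =>
    rw [pow_succ, mul_apply_eq_comp]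
    exact (ih _).trans ((T.le_of_opNorm_le hT x).trans_eq (one_mul _))

section Hilbert

variable {H : Type*} [NormedAddCommGroup H] [InnerProductSpace ℂ H] [CompleteSpace H]

theorem norm_adjoint_le_one_of_adjoint_comp_self {V : H →L[ℂ] H} (hV : adjoint V ∘L V = 1) :
    ‖adjoint V‖ ≤ 1 := by
  rw [LinearIsometryEquiv.norm_map]
  exact opNorm_le_bound _ zero_le_one fun x => by
    rw [V.norm_map_iff_adjoint_comp_self.mpr hV, one_mul]

theorem norm_adjoint_smul_apply {c : ℂ} (hc : ‖c‖ = 1) (T : H →L[ℂ] H) (x : H) :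
    ‖adjoint (c • T) x‖ = ‖adjoint T x‖ := by
  rw [← star_eq_adjoint, star_smul, smul_apply, norm_smul, star_eq_adjoint, norm_star, hc,
    one_mul]

variable {q : ℂ} {a b : H →L[ℂ] H}

theorem norm_adjoint_mul_pow_apply (hq : ‖q‖ = 1) (hab : a * b = q • (b * a)) (n : ℕ)
    (x : H) : ‖(adjoint (a * b) ^ n) x‖ = ‖(adjoint b ^ n) ((adjoint a ^ n) x)‖ := by
  rw [← mul_apply_eq_comp]
  simp only [← star_eq_adjoint, ← star_pow, ← star_mul]
  rw [pow_mul_pow_eq_smul_mul_pow_of_mul_eq_smul hab, star_eq_adjoint, star_eq_adjoint,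
    norm_adjoint_smul_apply (by rw [norm_pow, hq, one_pow])]

theorem norm_adjoint_mul_pow_apply_comm (hq : ‖q‖ = 1) (hab : a * b = q • (b * a)) (n : ℕ)
    (x : H) : ‖(adjoint (a * b) ^ n) x‖ = ‖(adjoint (b * a) ^ n) x‖ := by
  simp only [← star_eq_adjoint, ← star_pow]
  rw [hab, smul_pow, star_eq_adjoint, star_eq_adjoint,
    norm_adjoint_smul_apply (by rw [norm_pow, hq, one_pow])]

theorem tendsto_adjoint_mul_pow_apply_zero_of_left (hq : ‖q‖ = 1) (hab : a * b = q • (b * a))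
    (hb : adjoint b ∘L b = 1)
    (ha : ∀ x : H, Tendsto (fun n : ℕ => (adjoint a ^ n) x) atTop (nhds 0))
    (x : H) : Tendsto (fun n : ℕ => (adjoint (a * b) ^ n) x) atTop (nhds 0) := by
  rw [tendsto_zero_iff_norm_tendsto_zero]
  refine squeeze_zero (fun _ => norm_nonneg _) (fun n => ?_)
    (tendsto_zero_iff_norm_tendsto_zero.mp (ha x))
  rw [norm_adjoint_mul_pow_apply hq hab]
  exact norm_pow_apply_le_of_norm_le_one (norm_adjoint_le_one_of_adjoint_comp_self hb) n _

theorem tendsto_adjoint_mul_pow_apply_zero_of_right (hq : ‖q‖ = 1) (hab : a * b = q • (b * a))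
    (ha : adjoint a ∘L a = 1)
    (hb : ∀ x : H, Tendsto (fun n : ℕ => (adjoint b ^ n) x) atTop (nhds 0))
    (x : H) : Tendsto (fun n : ℕ => (adjoint (a * b) ^ n) x) atTop (nhds 0) := by
  have hconj : starRingEnd ℂ q * q = 1 := by
    rw [Complex.conj_mul', hq, Complex.ofReal_one, one_pow]
  have hba := tendsto_adjoint_mul_pow_apply_zero_of_left (by rwa [RCLike.norm_conj])
    (mul_eq_smul_mul_of_mul_eq_smul hconj hab) ha hb x
  rw [tendsto_zero_iff_norm_tendsto_zero] at hba ⊢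
  exact hba.congr fun n => (norm_adjoint_mul_pow_apply_comm hq hab n x).symm

end Hilbert

theorem stmt_15 {H : Type*} [NormedAddCommGroup H] [InnerProductSpace ℂ H] [CompleteSpace H]
    (q : ℂ) (hq : ‖q‖ = 1) (V₁ V₂ : H →L[ℂ] H)
    (hV₁ : adjoint V₁ ∘L V₁ = 1) (hV₂ : adjoint V₂ ∘L V₂ = 1)
    (hcomm : V₁ ∘L V₂ = q • (V₂ ∘L V₁))
    (hshift : (∀ h : H, Tendsto (fun n : ℕ => ((adjoint V₁) ^ n) h) atTop (nhds 0)) ∨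
      (∀ h : H, Tendsto (fun n : ℕ => ((adjoint V₂) ^ n) h) atTop (nhds 0))) :
    ∀ h : H, Tendsto (fun n : ℕ => ((adjoint (V₁ ∘L V₂)) ^ n) h) atTop (nhds 0) := by
  rcases hshift with hshift₁ | hshift₂
  · exact tendsto_adjoint_mul_pow_apply_zero_of_left hq hcomm hV₂ hshift₁
  · exact tendsto_adjoint_mul_pow_apply_zero_of_right hq hcomm hV₁ hshift₂
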